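/- arXiv:2412.09970 — 2 statements merged into one kernel-verified Lean document; each statement's English description precedes it below -/
import Mathlib

section
/- Let K : ℝ³_H → ℝ be integrable on Ω with (1/|Ω|) ∫_Ω K(s) ds = 1, let f : ℝ³_H → ℂ be H-periodic and continuous, and set T(f)(t) = (1/|Ω|) ∫_Ω f(t−s) · K(s) ds and d = (1/|Ω|) ∫_Ω ‖s‖·|K(s)| ds. If d > 0, then for every t ∈ ℝ³_H, | f(t) − T(f)(t) | ≤ ω_f(d) · ( 1 + (1/|Ω|) ∫_Ω |K(s)| ds ). -/
/-!
Cut a shift `τ` into `⌈‖τ‖/d⌉` equal steps of size at most `d`; telescoping gives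
`‖f t - f (t - τ)‖ ≤ (1 + ‖τ‖/d) ω_f(d)`. Since `∫ K = |Ω|`, the error `f t - T(f)(t)` is the
average of `(f t - f (t - s)) K(s)`, and integrating the pointwise bound against `|K|` gives
`ω_f(d) (|Ω|⁻¹ ∫ |K| + d⁻¹ |Ω|⁻¹ ∫ ‖s‖ |K(s)|) = ω_f(d) (|Ω|⁻¹ ∫ |K| + 1)`.
Continuity and periodicity make `f` bounded on the plane, so all suprema involved are finite.
-/

open MeasureTheory Finset

noncomputable section

/-- Cesàro numbers: `A_n^δ = (δ+1)(δ+2)⋯(δ+n)/n!`, with `A_0^δ = 1`. -/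
def cesaroA (δ : ℝ) (n : ℕ) : ℝ :=
  (∏ i ∈ Finset.range n, (δ + i + 1)) / n.factorial

/-- The identification of `ℝ²` with the plane `t₁+t₂+t₃ = 0` in `ℝ³`. -/
def phiH (x : ℝ × ℝ) : ℝ × ℝ × ℝ :=
  ((Real.sqrt 3 * x.1 - x.2) / 2, x.2, -(Real.sqrt 3 * x.1 + x.2) / 2)

/-- The plane `ℝ³_H = {t ∈ ℝ³ : t₁+t₂+t₃ = 0}`. -/
def planeH : Set (ℝ × ℝ × ℝ) := {t | t.1 + t.2.1 + t.2.2 = 0}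

/-- The hexagon `Ω = {t ∈ ℝ³_H : −1 ≤ t₁ < 1, −1 ≤ t₂ < 1, −1 < t₃ ≤ 1}`. -/
def OmegaH : Set (ℝ × ℝ × ℝ) :=
  {t | t.1 + t.2.1 + t.2.2 = 0 ∧ -1 ≤ t.1 ∧ t.1 < 1 ∧ -1 ≤ t.2.1 ∧ t.2.1 < 1 ∧
    -1 < t.2.2 ∧ t.2.2 ≤ 1}

/-- Integral over `Ω`, computed in the coordinates `(x₁, x₂)` of `ℝ²`. -/
def hexInt (g : (ℝ × ℝ × ℝ) → ℝ) : ℝ := ∫ x in phiH ⁻¹' OmegaH, g (phiH x)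

/-- Complex-valued integral over `Ω`, computed in the coordinates `(x₁, x₂)` of `ℝ²`. -/
def hexIntC (g : (ℝ × ℝ × ℝ) → ℂ) : ℂ := ∫ x in phiH ⁻¹' OmegaH, g (phiH x)

/-- The area `|Ω|` of the hexagon. -/
def areaOmega : ℝ := (volume (phiH ⁻¹' OmegaH)).toReal

/-- The function `Θ_n`. -/
def ThetaKer (n : ℕ) (t : ℝ × ℝ × ℝ) : ℝ :=
  (Real.sin ((n + 1) * Real.pi * (t.1 - t.2.1) / 3) *
      Real.sin ((n + 1) * Real.pi * (t.2.1 - t.2.2) / 3) *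
      Real.sin ((n + 1) * Real.pi * (t.2.2 - t.1) / 3)) /
    (Real.sin (Real.pi * (t.1 - t.2.1) / 3) *
      Real.sin (Real.pi * (t.2.1 - t.2.2) / 3) *
      Real.sin (Real.pi * (t.2.2 - t.1) / 3))

/-- The hexagonal Dirichlet kernel `D_n = Θ_n − Θ_{n−1}` (with `Θ_{−1} = 0`). -/
def DKer : ℕ → (ℝ × ℝ × ℝ) → ℝ
  | 0 => ThetaKer 0
  | n + 1 => fun t => ThetaKer (n + 1) t - ThetaKer n t

/-- The Cesàro kernel `K_n^δ`. -/
def KKer (δ : ℝ) (n : ℕ) (t : ℝ × ℝ × ℝ) : ℝ :=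
  (1 / cesaroA δ n) * ∑ k ∈ Finset.range (n + 1), cesaroA (δ - 1) (n - k) * DKer k t

/-- `‖t‖ = max(|t₁|,|t₂|,|t₃|)`. -/
def tnorm (t : ℝ × ℝ × ℝ) : ℝ := max |t.1| (max |t.2.1| |t.2.2|)

/-- `f` is `H`-periodic. -/
def HPeriodic (f : (ℝ × ℝ × ℝ) → ℂ) : Prop :=
  ∀ t ∈ planeH, ∀ s : ℤ × ℤ × ℤ, s.1 + s.2.1 + s.2.2 = 0 →
    s.1 ≡ s.2.1 [ZMOD 3] → s.2.1 ≡ s.2.2 [ZMOD 3] →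
      f (t + ((s.1 : ℝ), (s.2.1 : ℝ), (s.2.2 : ℝ))) = f t

/-- The uniform norm of `f − f(·+t)` over the closed hexagon. -/
def supDiff (f : (ℝ × ℝ × ℝ) → ℂ) (t : ℝ × ℝ × ℝ) : ℝ :=
  sSup ((fun x => ‖f x - f (x + t)‖) '' closure OmegaH)

/-- The modulus of continuity `ω_f`. -/
def modCont (f : (ℝ × ℝ × ℝ) → ℂ) (u : ℝ) : ℝ :=
  sSup {a | ∃ t ∈ planeH, 0 < tnorm t ∧ tnorm t ≤ u ∧ a = supDiff f t}

/-- The Cesàro `(C,δ)` mean `S_n^δ(f)`. -/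
def cesaroMean (δ : ℝ) (n : ℕ) (f : (ℝ × ℝ × ℝ) → ℂ) (t : ℝ × ℝ × ℝ) : ℂ :=
  ((1 / areaOmega : ℝ) : ℂ) * hexIntC (fun s => f (t - s) * ((KKer δ n s : ℝ) : ℂ))

end

section Telescoping

variable {E F : Type*} [NormedAddCommGroup E] [NormedSpace ℝ E] [NormedAddCommGroup F]

theorem norm_sub_sub_le_of_forall_norm_sub_add_le {P : Submodule ℝ E} {f : E → F} {d M : ℝ}
    (hd : 0 < d) (hM : 0 ≤ M)
    (h : ∀ w ∈ P, ∀ σ ∈ P, 0 < ‖σ‖ → ‖σ‖ ≤ d → ‖f w - f (w + σ)‖ ≤ M)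
    {t τ : E} (ht : t ∈ P) (hτ : τ ∈ P) : ‖f t - f (t - τ)‖ ≤ (1 + ‖τ‖ / d) * M := by
  rcases eq_or_ne τ 0 with rfl | hτ0
  · simpa using hM
  set n := ⌈‖τ‖ / d⌉₊
  have hn : (0 : ℝ) < n := Nat.cast_pos.mpr (Nat.ceil_pos.mpr (by positivity))
  set σ := (n : ℝ)⁻¹ • τ
  have hσ : σ ∈ P := P.smul_mem _ hτ
  have hσ_norm : ‖σ‖ = ‖τ‖ / n := by
    rw [norm_smul, norm_inv, Real.norm_natCast, inv_mul_eq_div]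
  have hσ_pos : 0 < ‖σ‖ := by rw [hσ_norm]; positivity
  have hσ_le : ‖σ‖ ≤ d := by
    rw [hσ_norm, div_le_iff₀ hn, ← div_le_iff₀' hd]
    exact Nat.le_ceil _
  have hnσ : (n : ℝ) • σ = τ := smul_inv_smul₀ hn.ne' τ
  have hstep : ∀ i : ℕ, ‖f (t - (i : ℝ) • σ) - f (t - ((i + 1 : ℕ) : ℝ) • σ)‖ ≤ M := by
    intro i
    have hw : t - ((i + 1 : ℕ) : ℝ) • σ ∈ P := P.sub_mem ht (P.smul_mem _ hσ)
    have hshift : t - ((i + 1 : ℕ) : ℝ) • σ + σ = t - (i : ℝ) • σ := by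
      push_cast; rw [add_smul, one_smul]; abel
    rw [norm_sub_rev, ← hshift]
    exact h _ hw σ hσ hσ_pos hσ_le
  calc ‖f t - f (t - τ)‖
      = ‖∑ i ∈ range n, (f (t - (i : ℝ) • σ) - f (t - ((i + 1 : ℕ) : ℝ) • σ))‖ := by
        rw [sum_range_sub' (fun i : ℕ => f (t - (i : ℝ) • σ)), hnσ]
        simp
    _ ≤ n * M := by
        simpa using norm_sum_le_of_le (range n) fun i _ => hstep i
    _ ≤ (1 + ‖τ‖ / d) * M := by
        gcongr
        linarith [Nat.ceil_lt_add_one (show 0 ≤ ‖τ‖ / d by positivity)]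

end Telescoping

section KernelEstimate

variable {α : Type*} [MeasurableSpace α] {μ : Measure α}

theorem norm_sub_mul_integral_mul_le {a : ℝ} (ha : 0 ≤ a) {K : α → ℝ} (hK : Integrable K μ)
    (hK_norm : a * ∫ x, K x ∂μ = 1) (c : ℂ) {g : α → ℂ} (hg : AEStronglyMeasurable g μ)
    {B : α → ℝ} (hB : Integrable (fun x => B x * |K x|) μ) (hgB : ∀ x, ‖c - g x‖ ≤ B x) :
    ‖c - (a : ℂ) * ∫ x, g x * (K x : ℂ) ∂μ‖ ≤ a * ∫ x, B x * |K x| ∂μ := by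
  have hdiff_le : ∀ x, ‖(c - g x) * (K x : ℂ)‖ ≤ B x * |K x| := fun x => by
    rw [norm_mul, Complex.norm_real, Real.norm_eq_abs]
    exact mul_le_mul_of_nonneg_right (hgB x) (abs_nonneg _)
  have hdiff : Integrable (fun x => (c - g x) * (K x : ℂ)) μ :=
    hB.mono' ((aestronglyMeasurable_const.sub hg).mul hK.ofReal.aestronglyMeasurable)
      (ae_of_all _ hdiff_le)
  have hcK : Integrable (fun x => c * (K x : ℂ)) μ := hK.ofReal.const_mul c
  have herror : c - (a : ℂ) * ∫ x, g x * (K x : ℂ) ∂μ =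
      (a : ℂ) * ∫ x, (c - g x) * (K x : ℂ) ∂μ := by
    have hgK : Integrable (fun x => g x * (K x : ℂ)) μ :=
      (hcK.sub hdiff).congr (ae_of_all _ fun x => by simp only [Pi.sub_apply]; ring)
    have hc : c = (a : ℂ) * ∫ x, c * (K x : ℂ) ∂μ := by
      rw [integral_const_mul, integral_complex_ofReal, mul_left_comm, ← Complex.ofReal_mul, hK_norm]
      simp
    conv_lhs => rw [hc]
    rw [← mul_sub, ← integral_sub hcK hgK]
    simp_rw [sub_mul]
  rw [herror, norm_mul, Complex.norm_real, Real.norm_of_nonneg ha]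
  gcongr
  exact (norm_integral_le_integral_norm _).trans
    (integral_mono_of_nonneg (ae_of_all _ fun _ => norm_nonneg _) hB (ae_of_all _ hdiff_le))

end KernelEstimate

theorem areaOmega_nonneg : 0 ≤ areaOmega := ENNReal.toReal_nonneg

theorem tnorm_eq_norm (t : ℝ × ℝ × ℝ) : tnorm t = ‖t‖ := by
  simp [tnorm, Prod.norm_def]

def planeHSubmodule : Submodule ℝ (ℝ × ℝ × ℝ) where
  carrier := planeH
  add_mem' {a b} ha hb := by
    simp only [planeH, Set.mem_ofPred_eq, Prod.fst_add, Prod.snd_add] at *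
    linarith
  zero_mem' := by simp [planeH]
  smul_mem' c a ha := by
    simp only [planeH, Set.mem_ofPred_eq, Prod.smul_fst, Prod.smul_snd, smul_eq_mul] at *
    linear_combination c * ha

theorem phiH_mem_planeH (x : ℝ × ℝ) : phiH x ∈ planeH := by
  simp only [phiH, planeH, Set.mem_ofPred_eq]
  ring

theorem continuous_phiH : Continuous phiH := by
  unfold phiH
  fun_prop

theorem OmegaH_subset_planeH : OmegaH ⊆ planeH := fun _ ht => ht.1

theorem isClosed_planeH : IsClosed planeH :=
  isClosed_eq (by fun_prop) continuous_const

theorem closure_OmegaH_subset_planeH : closure OmegaH ⊆ planeH :=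
  closure_minimal OmegaH_subset_planeH isClosed_planeH

theorem isCompact_closure_OmegaH : IsCompact (closure OmegaH) := by
  have hsub : OmegaH ⊆ Metric.closedBall 0 1 := by
    rintro t ⟨-, h1, h1', h2, h2', h3, h3'⟩
    rw [mem_closedBall_zero_iff, ← tnorm_eq_norm]
    exact max_le (abs_le.mpr ⟨h1, h1'.le⟩) (max_le (abs_le.mpr ⟨h2, h2'.le⟩)
      (abs_le.mpr ⟨h3.le, h3'⟩))
  exact (Metric.isBounded_closedBall.subset hsub).isCompact_closure

theorem exists_sub_mem_OmegaH {t : ℝ × ℝ × ℝ} (ht : t ∈ planeH) :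
    ∃ s : ℤ × ℤ × ℤ, s.1 + s.2.1 + s.2.2 = 0 ∧ s.1 ≡ s.2.1 [ZMOD 3] ∧ s.2.1 ≡ s.2.2 [ZMOD 3] ∧
      t - ((s.1 : ℝ), (s.2.1 : ℝ), (s.2.2 : ℝ)) ∈ OmegaH := by
  obtain ⟨t₁, t₂, t₃⟩ := t
  have ht₃ : t₃ = -t₁ - t₂ := by simp only [planeH, Set.mem_ofPred_eq] at ht; linarith
  -- Start from the unit square of `(⌊t₁⌋, ⌊t₂⌋)` and move by one unit according to the class of
  -- `⌊t₁⌋ - ⌊t₂⌋` mod 3 (and, in the class `0`, to the triangle of the square containing `t`).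
  have hcell : ∃ m k : ℤ, m ≡ k [ZMOD 3] ∧ -1 ≤ t₁ - m ∧ t₁ - m < 1 ∧ -1 ≤ t₂ - k ∧
      t₂ - k < 1 ∧ -1 ≤ t₁ - m + (t₂ - k) ∧ t₁ - m + (t₂ - k) < 1 := by
    have h₁ := Int.floor_le t₁
    have h₁' := Int.lt_floor_add_one t₁
    have h₂ := Int.floor_le t₂
    have h₂' := Int.lt_floor_add_one t₂
    simp only [Int.ModEq]
    rcases (by omega : (⌊t₁⌋ - ⌊t₂⌋) % 3 = 0 ∨ (⌊t₁⌋ - ⌊t₂⌋) % 3 = 1 ∨ (⌊t₁⌋ - ⌊t₂⌋) % 3 = 2)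
      with hr | hr | hr
    · rcases lt_or_ge (t₁ - ⌊t₁⌋ + (t₂ - ⌊t₂⌋)) 1 with hlt | hge
      · refine ⟨⌊t₁⌋, ⌊t₂⌋, by omega, ?_⟩
        refine ⟨?_, ?_, ?_, ?_, ?_, ?_⟩ <;> linarith
      · refine ⟨⌊t₁⌋ + 1, ⌊t₂⌋ + 1, by omega, ?_⟩
        push_cast
        refine ⟨?_, ?_, ?_, ?_, ?_, ?_⟩ <;> linarith
    · refine ⟨⌊t₁⌋, ⌊t₂⌋ + 1, by omega, ?_⟩
      push_cast
      refine ⟨?_, ?_, ?_, ?_, ?_, ?_⟩ <;> linarith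
    · refine ⟨⌊t₁⌋ + 1, ⌊t₂⌋, by omega, ?_⟩
      push_cast
      refine ⟨?_, ?_, ?_, ?_, ?_, ?_⟩ <;> linarith
  obtain ⟨m, k, hmk, h⟩ := hcell
  refine ⟨(m, k, -m - k), by ring, hmk, ?_, ?_⟩
  · simp only [Int.ModEq] at hmk ⊢
    omega
  · simp only [OmegaH, Set.mem_ofPred_eq, Prod.mk_sub_mk, ht₃]
    push_cast
    refine ⟨by ring, ?_, ?_, ?_, ?_, ?_, ?_⟩ <;> linarith

namespace HPeriodic

variable {f : (ℝ × ℝ × ℝ) → ℂ}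

theorem exists_mem_OmegaH (hf : HPeriodic f) {w : ℝ × ℝ × ℝ} (hw : w ∈ planeH) :
    ∃ x ∈ OmegaH, ∀ τ ∈ planeH, f (w + τ) = f (x + τ) := by
  obtain ⟨s, hs, hs₁, hs₂, hx⟩ := exists_sub_mem_OmegaH hw
  refine ⟨_, hx, fun τ hτ => ?_⟩
  have hxτ : w - ((s.1 : ℝ), (s.2.1 : ℝ), (s.2.2 : ℝ)) + τ ∈ planeH :=
    planeHSubmodule.add_mem (OmegaH_subset_planeH hx) hτ
  rw [← hf _ hxτ s hs hs₁ hs₂]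
  congr 1
  abel

theorem exists_forall_norm_le (hf : HPeriodic f) (hfc : ContinuousOn f planeH) :
    ∃ C, ∀ w ∈ planeH, ‖f w‖ ≤ C := by
  obtain ⟨C, hC⟩ := isCompact_closure_OmegaH.exists_bound_of_continuousOn
    (hfc.mono closure_OmegaH_subset_planeH)
  refine ⟨C, fun w hw => ?_⟩
  obtain ⟨x, hx, hfx⟩ := hf.exists_mem_OmegaH hw
  have hfw : f w = f x := by simpa using hfx 0 planeHSubmodule.zero_mem
  exact hfw ▸ hC x (subset_closure hx)

end HPeriodic

section ModulusOfContinuity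

variable {f : (ℝ × ℝ × ℝ) → ℂ} {C : ℝ}

theorem supDiff_nonneg (f : (ℝ × ℝ × ℝ) → ℂ) (τ : ℝ × ℝ × ℝ) : 0 ≤ supDiff f τ :=
  Real.sSup_nonneg (by rintro _ ⟨x, -, rfl⟩; exact norm_nonneg _)

theorem modCont_nonneg (f : (ℝ × ℝ × ℝ) → ℂ) (u : ℝ) : 0 ≤ modCont f u :=
  Real.sSup_nonneg (by rintro _ ⟨τ, -, -, -, rfl⟩; exact supDiff_nonneg f τ)

theorem norm_sub_add_le_two_mul (hC : ∀ w ∈ planeH, ‖f w‖ ≤ C) {w τ : ℝ × ℝ × ℝ}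
    (hw : w ∈ planeH) (hτ : τ ∈ planeH) : ‖f w - f (w + τ)‖ ≤ 2 * C :=
  (norm_sub_le _ _).trans (by linarith [hC w hw, hC _ (planeHSubmodule.add_mem hw hτ)])

theorem two_mul_mem_upperBounds_norm_sub_add (hC : ∀ w ∈ planeH, ‖f w‖ ≤ C)
    {τ : ℝ × ℝ × ℝ} (hτ : τ ∈ planeH) :
    2 * C ∈ upperBounds ((fun x => ‖f x - f (x + τ)‖) '' closure OmegaH) := by
  rintro _ ⟨x, hx, rfl⟩
  exact norm_sub_add_le_two_mul hC (closure_OmegaH_subset_planeH hx) hτ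

theorem supDiff_le_two_mul (hC : ∀ w ∈ planeH, ‖f w‖ ≤ C) {τ : ℝ × ℝ × ℝ}
    (hτ : τ ∈ planeH) : supDiff f τ ≤ 2 * C :=
  Real.sSup_le (fun _ ha => two_mul_mem_upperBounds_norm_sub_add hC hτ ha)
    (by linarith [norm_nonneg (f 0), hC 0 planeHSubmodule.zero_mem])

theorem HPeriodic.norm_sub_add_le_supDiff (hf : HPeriodic f) (hC : ∀ w ∈ planeH, ‖f w‖ ≤ C)
    {w τ : ℝ × ℝ × ℝ} (hw : w ∈ planeH) (hτ : τ ∈ planeH) :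
    ‖f w - f (w + τ)‖ ≤ supDiff f τ := by
  obtain ⟨x, hx, hfx⟩ := hf.exists_mem_OmegaH hw
  have hfw : f w = f x := by simpa using hfx 0 planeHSubmodule.zero_mem
  rw [hfw, hfx τ hτ]
  exact le_csSup ⟨_, two_mul_mem_upperBounds_norm_sub_add hC hτ⟩ ⟨x, subset_closure hx, rfl⟩

theorem supDiff_le_modCont (hC : ∀ w ∈ planeH, ‖f w‖ ≤ C) {τ : ℝ × ℝ × ℝ} {u : ℝ}
    (hτ : τ ∈ planeH) (hτ_pos : 0 < tnorm τ) (hτ_le : tnorm τ ≤ u) :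
    supDiff f τ ≤ modCont f u :=
  le_csSup ⟨2 * C, by rintro _ ⟨σ, hσ, -, -, rfl⟩; exact supDiff_le_two_mul hC hσ⟩
    ⟨τ, hτ, hτ_pos, hτ_le, rfl⟩

theorem HPeriodic.norm_sub_sub_le_modCont (hf : HPeriodic f) (hC : ∀ w ∈ planeH, ‖f w‖ ≤ C)
    {d : ℝ} (hd : 0 < d) {t τ : ℝ × ℝ × ℝ} (ht : t ∈ planeH) (hτ : τ ∈ planeH) :
    ‖f t - f (t - τ)‖ ≤ (1 + tnorm τ / d) * modCont f d := by
  rw [tnorm_eq_norm]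
  refine norm_sub_sub_le_of_forall_norm_sub_add_le (P := planeHSubmodule) hd (modCont_nonneg f d)
    (fun w hw σ hσ hσ_pos hσ_le => ?_) ht hτ
  rw [← tnorm_eq_norm] at hσ_pos hσ_le
  exact (hf.norm_sub_add_le_supDiff hC hw hσ).trans (supDiff_le_modCont hC hσ hσ_pos hσ_le)

end ModulusOfContinuity

open MeasureTheory in
theorem stmt_6 (K : (ℝ × ℝ × ℝ) → ℝ)
    (hKint : IntegrableOn (fun x => K (phiH x)) (phiH ⁻¹' OmegaH) volume)
    (hKnorm : (1 / areaOmega) * hexInt K = 1)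
    (f : (ℝ × ℝ × ℝ) → ℂ) (hf : HPeriodic f) (hfc : ContinuousOn f planeH)
    (d : ℝ) (hd : d = (1 / areaOmega) * hexInt (fun s => tnorm s * |K s|)) (hdpos : 0 < d) :
    ∀ t ∈ planeH,
      ‖(f t - ((1 / areaOmega : ℝ) : ℂ) * hexIntC (fun s => f (t - s) * ((K s : ℝ) : ℂ)))‖ ≤
        modCont f d * (1 + (1 / areaOmega) * hexInt (fun s => |K s|)) := by
  intro t ht
  obtain ⟨C, hC⟩ := hf.exists_forall_norm_le hfc
  set M := modCont f d
  -- `d ≠ 0`, so the integral defining `d` is not the junk value of a non-integrable function.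
  have htnormK : IntegrableOn (fun x => tnorm (phiH x) * |K (phiH x)|) (phiH ⁻¹' OmegaH) := by
    by_contra hnot
    rw [hexInt, integral_undef hnot, mul_zero] at hd
    exact hdpos.ne' hd
  have hB : IntegrableOn (fun x => (1 + tnorm (phiH x) / d) * M * |K (phiH x)|)
      (phiH ⁻¹' OmegaH) :=
    Integrable.congr ((hKint.abs.const_mul M).add (htnormK.const_mul (M / d)))
      (ae_of_all _ fun x => by simp only [Pi.add_apply]; ring)
  have hsplit : ∫ x in phiH ⁻¹' OmegaH, (1 + tnorm (phiH x) / d) * M * |K (phiH x)| =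
      M * hexInt (fun s => |K s|) + M / d * hexInt (fun s => tnorm s * |K s|) := by
    rw [hexInt, hexInt, ← integral_const_mul, ← integral_const_mul,
      ← integral_add (hKint.abs.const_mul M) (htnormK.const_mul (M / d))]
    congr 1 with x
    ring
  have hf_meas : Continuous fun x => f (t - phiH x) :=
    hfc.comp_continuous (continuous_const.sub continuous_phiH)
      fun x => planeHSubmodule.sub_mem ht (phiH_mem_planeH x)
  refine (norm_sub_mul_integral_mul_le (a := 1 / areaOmega)
    (one_div_nonneg.mpr areaOmega_nonneg) hKint hKnorm (f t) hf_meas.aestronglyMeasurable hB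
    fun x => hf.norm_sub_sub_le_modCont hC hdpos ht (phiH_mem_planeH x)).trans_eq ?_
  rw [hsplit, mul_add, mul_left_comm _ (M / d), ← hd, div_mul_cancel₀ M hdpos.ne']
  ring
end

section
/- There exists an absolute constant C > 0 such that for every r with 1/2 ≤ r < 1, ∫_Ω ‖t‖ · P_r(t) dt ≤ C · (1−r) · |log(1−r)|, where ‖t‖ = max(|t1|,|t2|,|t3|). -/
open MeasureTheory Finset

/-- `q_r(x) = 1 − 2r·cos x + r²`. -/
noncomputable def qr (r x : ℝ) : ℝ := 1 - 2 * r * Real.cos x + r ^ 2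

/-- The hexagonal Poisson kernel `P_r`. -/
noncomputable def PKer (r : ℝ) (t : ℝ × ℝ × ℝ) : ℝ :=
  (1 - r) ^ 3 * (1 - r ^ 3) /
      (qr r (2 * Real.pi * (t.1 - t.2.1) / 3) * qr r (2 * Real.pi * (t.2.1 - t.2.2) / 3) *
        qr r (2 * Real.pi * (t.2.2 - t.1) / 3)) +
    r * (1 - r) ^ 2 /
      (qr r (2 * Real.pi * (t.1 - t.2.1) / 3) * qr r (2 * Real.pi * (t.2.1 - t.2.2) / 3)) +
    r * (1 - r) ^ 2 /
      (qr r (2 * Real.pi * (t.2.1 - t.2.2) / 3) * qr r (2 * Real.pi * (t.2.2 - t.1) / 3)) +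
    r * (1 - r) ^ 2 /
      (qr r (2 * Real.pi * (t.2.2 - t.1) / 3) * qr r (2 * Real.pi * (t.1 - t.2.1) / 3))

/-!
Write `ε = 1 - r` and `u, v, w` for the three angles `2π(tᵢ - tⱼ)/3`, so that `u + v + w = 0`
and `|u|, |v|, |w| ≤ 4π/3` on `Ω`. There `q_r(s) ≥ (ε² + s²)/32` and
`P_r ≤ 4ε² ∑ 1/(q_r(a) q_r(b))` over the three pairs `(a, b)` of angles; since also
`‖t‖ ≤ |a| + |b|` for each pair, `‖t‖ P_r` is bounded by a sum of terms `(|a| + |b|) c(a) c(b)`,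
where `c` is the Cauchy density of scale `ε`. In the coordinates of `ℝ²` every pair `(a, b)` is a
linear map with determinant at least `1`, so each such term integrates to at most twice the
truncated first moment `∫_{|s| ≤ 4π/3} |s| c(s) ds ≤ 2ε arsinh (4π/(3ε)) = O(ε |log ε|)`.
-/

open MeasureTheory ProbabilityTheory Real
open scoped ENNReal NNReal

lemma sq_le_mul_one_sub_cos {s : ℝ} (hs : |s| ≤ 4 * π / 3) : s ^ 2 ≤ 32 * (1 - cos s) := by
  have hπ3 : 3 < π := pi_gt_three
  have hπ4 : π < 3.15 := pi_lt_d2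
  rcases le_or_gt |s| π with hsπ | hsπ
  · have hcos := cos_le_one_sub_mul_cos_sq hsπ
    have hcoef : 1 / 32 ≤ 2 / π ^ 2 := by
      rw [div_le_div_iff₀ (by norm_num) (by positivity)]
      nlinarith
    nlinarith [sq_nonneg s]
  · have hcos : cos s ≤ 0 := by
      rw [← cos_abs]
      exact cos_nonpos_of_pi_div_two_le_of_le (by linarith) (by linarith)
    have hsq : s ^ 2 ≤ (4 * π / 3) ^ 2 := by
      rw [← sq_abs]
      exact pow_le_pow_left₀ (abs_nonneg s) hs 2
    nlinarith

lemma qr_eq_sq_add (r s : ℝ) : qr r s = (1 - r) ^ 2 + 2 * r * (1 - cos s) := by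
  rw [qr]; ring

lemma sq_le_qr {r : ℝ} (hr : 0 ≤ r) (s : ℝ) : (1 - r) ^ 2 ≤ qr r s := by
  rw [qr_eq_sq_add]
  nlinarith [cos_le_one s]

lemma qr_pos {r : ℝ} (hr0 : 0 ≤ r) (hr1 : r < 1) (s : ℝ) : 0 < qr r s :=
  lt_of_lt_of_le (by nlinarith) (sq_le_qr hr0 s)

lemma sq_add_sq_le_qr {r s : ℝ} (hr : 1 / 2 ≤ r) (hs : |s| ≤ 4 * π / 3) :
    (1 - r) ^ 2 + s ^ 2 ≤ 32 * qr r s := by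
  rw [qr_eq_sq_add]
  nlinarith [sq_le_mul_one_sub_cos hs, cos_le_one s]

lemma PKer_nonneg {r : ℝ} (hr0 : 0 ≤ r) (hr1 : r < 1) (t : ℝ × ℝ × ℝ) : 0 ≤ PKer r t := by
  have hq := qr_pos hr0 hr1
  have hr3 : 0 ≤ 1 - r ^ 3 := by nlinarith [pow_le_one₀ hr0 hr1.le (n := 3)]
  have h1r : 0 ≤ 1 - r := by linarith
  unfold PKer
  have := hq (2 * π * (t.1 - t.2.1) / 3)
  have := hq (2 * π * (t.2.1 - t.2.2) / 3)
  have := hq (2 * π * (t.2.2 - t.1) / 3)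
  positivity

/-- With `Qᵢ` the three factors `q_r(2π(tᵢ - tᵢ₊₁)/3)`, the left side is `PKer r t`. -/
lemma poisson_sum_le {r Q₁ Q₂ Q₃ : ℝ} (hr0 : 0 ≤ r) (hr1 : r < 1)
    (h₁ : (1 - r) ^ 2 ≤ Q₁) (h₂ : (1 - r) ^ 2 ≤ Q₂) (h₃ : (1 - r) ^ 2 ≤ Q₃) :
    (1 - r) ^ 3 * (1 - r ^ 3) / (Q₁ * Q₂ * Q₃) + r * (1 - r) ^ 2 / (Q₁ * Q₂) +
        r * (1 - r) ^ 2 / (Q₂ * Q₃) + r * (1 - r) ^ 2 / (Q₃ * Q₁) ≤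
      4 * ((1 - r) ^ 2 / (Q₁ * Q₂) + (1 - r) ^ 2 / (Q₂ * Q₃) + (1 - r) ^ 2 / (Q₃ * Q₁)) := by
  have hε : 0 < (1 - r) ^ 2 := by nlinarith
  have hQ₁ : 0 < Q₁ := hε.trans_le h₁
  have hQ₂ : 0 < Q₂ := hε.trans_le h₂
  have hQ₃ : 0 < Q₃ := hε.trans_le h₃
  -- `1 - r³ = (1 - r)(1 + r + r²) ≤ 3(1 - r)` and `(1 - r)² ≤ Q₃`
  have hcube : (1 - r) ^ 3 * (1 - r ^ 3) ≤ 3 * (1 - r) ^ 2 * Q₃ := by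
    have : (1 - r) * (1 - r ^ 3) ≤ 3 * (1 - r) ^ 2 := by
      nlinarith [mul_nonneg (mul_nonneg (sub_nonneg.2 hr1.le) (sq_nonneg (1 - r)))
        (by linarith : (0 : ℝ) ≤ 2 + r)]
    nlinarith [mul_le_mul_of_nonneg_left h₃ (sq_nonneg (1 - r))]
  have hfirst : (1 - r) ^ 3 * (1 - r ^ 3) / (Q₁ * Q₂ * Q₃) ≤ 3 * ((1 - r) ^ 2 / (Q₁ * Q₂)) := by
    rw [div_le_iff₀ (by positivity)]
    calc (1 - r) ^ 3 * (1 - r ^ 3) ≤ 3 * (1 - r) ^ 2 * Q₃ := hcube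
      _ = 3 * ((1 - r) ^ 2 / (Q₁ * Q₂)) * (Q₁ * Q₂ * Q₃) := by field_simp
  have hdrop : ∀ Q : ℝ, 0 < Q → r * (1 - r) ^ 2 / Q ≤ (1 - r) ^ 2 / Q := fun Q hQ => by
    gcongr; nlinarith
  have h₂₃ : 0 ≤ (1 - r) ^ 2 / (Q₂ * Q₃) := by positivity
  have h₃₁ : 0 ≤ (1 - r) ^ 2 / (Q₃ * Q₁) := by positivity
  linarith [hdrop _ (mul_pos hQ₁ hQ₂), hdrop _ (mul_pos hQ₂ hQ₃), hdrop _ (mul_pos hQ₃ hQ₁)]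

noncomputable def hexAngle (x y : ℝ) : ℝ := 2 * π * (x - y) / 3

noncomputable def cauchyPairWeight (γ : ℝ≥0) (a b : ℝ) : ℝ :=
  (|a| + |b|) * cauchyPDFReal 0 γ a * cauchyPDFReal 0 γ b

lemma abs_hexAngle_le {x y : ℝ} (hx : |x| ≤ 1) (hy : |y| ≤ 1) : |hexAngle x y| ≤ 4 * π / 3 := by
  have hxy : |x - y| ≤ 2 := (abs_sub x y).trans (by linarith)
  rw [hexAngle, mul_div_right_comm, abs_mul, abs_of_pos (by positivity : 0 < 2 * π / 3)]
  nlinarith [pi_pos]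

lemma abs_sub_le_abs_hexAngle (x y : ℝ) : |x - y| ≤ |hexAngle x y| := by
  rw [hexAngle, mul_div_right_comm, abs_mul, abs_of_pos (by positivity : 0 < 2 * π / 3)]
  nlinarith [pi_gt_three, abs_nonneg (x - y)]

lemma abs_le_abs_hexAngle_add {a b c : ℝ} (h : a + b + c = 0) :
    |a| ≤ |hexAngle a b| + |hexAngle b c| ∧ |b| ≤ |hexAngle a b| + |hexAngle b c| ∧
      |c| ≤ |hexAngle a b| + |hexAngle b c| := by
  have hab := abs_sub_le_abs_hexAngle a b
  have hbc := abs_sub_le_abs_hexAngle b c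
  have := le_abs_self (a - b); have := neg_abs_le (a - b)
  have := le_abs_self (b - c); have := neg_abs_le (b - c)
  refine ⟨abs_le.2 ⟨?_, ?_⟩, abs_le.2 ⟨?_, ?_⟩, abs_le.2 ⟨?_, ?_⟩⟩ <;> linarith

lemma tnorm_nonneg (t : ℝ × ℝ × ℝ) : 0 ≤ tnorm t := (abs_nonneg _).trans (le_max_left _ _)

lemma mul_sq_div_qr_mul_qr_le {r : ℝ} {γ : ℝ≥0} (hr : 1 / 2 ≤ r) (hr1 : r < 1)
    (hγ : (γ : ℝ) = 1 - r) {N x y : ℝ} (hN : N ≤ |x| + |y|)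
    (hx : |x| ≤ 4 * π / 3) (hy : |y| ≤ 4 * π / 3) :
    N * ((1 - r) ^ 2 / (qr r x * qr r y)) ≤ 1024 * π ^ 2 * cauchyPairWeight γ x y := by
  have hε : 0 < 1 - r := by linarith
  have hQx := qr_pos (by linarith) hr1 x
  have hQy := qr_pos (by linarith) hr1 y
  have hDQ : ((1 - r) ^ 2 + x ^ 2) * ((1 - r) ^ 2 + y ^ 2) ≤ 1024 * (qr r x * qr r y) :=
    calc _ ≤ (32 * qr r x) * (32 * qr r y) :=
          mul_le_mul (sq_add_sq_le_qr hr hx) (sq_add_sq_le_qr hr hy) (by positivity) (by positivity)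
      _ = 1024 * (qr r x * qr r y) := by ring
  calc N * ((1 - r) ^ 2 / (qr r x * qr r y))
      ≤ (|x| + |y|) * ((1 - r) ^ 2 / (qr r x * qr r y)) := by gcongr
    _ ≤ (|x| + |y|) * (1024 * (1 - r) ^ 2 / (((1 - r) ^ 2 + x ^ 2) * ((1 - r) ^ 2 + y ^ 2))) := by
        refine mul_le_mul_of_nonneg_left ?_ (by positivity)
        rw [div_le_div_iff₀ (by positivity) (by positivity)]
        nlinarith [mul_le_mul_of_nonneg_left hDQ (sq_nonneg (1 - r))]
    _ = 1024 * π ^ 2 * cauchyPairWeight γ x y := by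
        simp only [cauchyPairWeight, cauchyPDFReal_def, hγ, sub_zero]
        field_simp
        ring

lemma tnorm_mul_PKer_le {r : ℝ} {γ : ℝ≥0} (hr : 1 / 2 ≤ r) (hr1 : r < 1)
    (hγ : (γ : ℝ) = 1 - r) {t : ℝ × ℝ × ℝ} (hsum : t.1 + t.2.1 + t.2.2 = 0)
    (h₁ : |t.1| ≤ 1) (h₂ : |t.2.1| ≤ 1) (h₃ : |t.2.2| ≤ 1) :
    tnorm t * PKer r t ≤ 4096 * π ^ 2 *
      (cauchyPairWeight γ (hexAngle t.1 t.2.1) (hexAngle t.2.1 t.2.2) +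
        cauchyPairWeight γ (hexAngle t.2.1 t.2.2) (hexAngle t.2.2 t.1) +
        cauchyPairWeight γ (hexAngle t.2.2 t.1) (hexAngle t.1 t.2.1)) := by
  obtain ⟨a, b, c⟩ := t
  simp only at hsum h₁ h₂ h₃ ⊢
  have hr0 : 0 ≤ r := by linarith
  have hP : PKer r (a, b, c) ≤ 4 *
      ((1 - r) ^ 2 / (qr r (hexAngle a b) * qr r (hexAngle b c)) +
        (1 - r) ^ 2 / (qr r (hexAngle b c) * qr r (hexAngle c a)) +
        (1 - r) ^ 2 / (qr r (hexAngle c a) * qr r (hexAngle a b))) :=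
    poisson_sum_le hr0 hr1 (sq_le_qr hr0 _) (sq_le_qr hr0 _) (sq_le_qr hr0 _)
  obtain ⟨ha₁, hb₁, hc₁⟩ := abs_le_abs_hexAngle_add hsum
  obtain ⟨hb₂, hc₂, ha₂⟩ := abs_le_abs_hexAngle_add (a := b) (b := c) (c := a) (by linarith)
  obtain ⟨hc₃, ha₃, hb₃⟩ := abs_le_abs_hexAngle_add (a := c) (b := a) (c := b) (by linarith)
  have hab := abs_hexAngle_le h₁ h₂
  have hbc := abs_hexAngle_le h₂ h₃
  have hca := abs_hexAngle_le h₃ h₁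
  have hN := tnorm_nonneg (a, b, c)
  calc tnorm (a, b, c) * PKer r (a, b, c)
      ≤ tnorm (a, b, c) * (4 *
          ((1 - r) ^ 2 / (qr r (hexAngle a b) * qr r (hexAngle b c)) +
            (1 - r) ^ 2 / (qr r (hexAngle b c) * qr r (hexAngle c a)) +
            (1 - r) ^ 2 / (qr r (hexAngle c a) * qr r (hexAngle a b)))) := by gcongr
    _ = 4 * (tnorm (a, b, c) * ((1 - r) ^ 2 / (qr r (hexAngle a b) * qr r (hexAngle b c))) +
          tnorm (a, b, c) * ((1 - r) ^ 2 / (qr r (hexAngle b c) * qr r (hexAngle c a))) +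
          tnorm (a, b, c) * ((1 - r) ^ 2 / (qr r (hexAngle c a) * qr r (hexAngle a b)))) := by
        ring
    _ ≤ 4 * (1024 * π ^ 2 * cauchyPairWeight γ (hexAngle a b) (hexAngle b c) +
          1024 * π ^ 2 * cauchyPairWeight γ (hexAngle b c) (hexAngle c a) +
          1024 * π ^ 2 * cauchyPairWeight γ (hexAngle c a) (hexAngle a b)) := by
        gcongr 4 * (?_ + ?_ + ?_)
        · exact mul_sq_div_qr_mul_qr_le hr hr1 hγ (max_le ha₁ (max_le hb₁ hc₁)) hab hbc
        · exact mul_sq_div_qr_mul_qr_le hr hr1 hγ (max_le ha₂ (max_le hb₂ hc₂)) hbc hca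
        · exact mul_sq_div_qr_mul_qr_le hr hr1 hγ (max_le ha₃ (max_le hb₃ hc₃)) hca hab
    _ = _ := by ring

noncomputable def cauchyMoment (γ : ℝ≥0) (M : ℝ) : ℝ → ℝ≥0∞ :=
  (Set.Icc (-M) M).indicator fun s => ENNReal.ofReal (|s| * cauchyPDFReal 0 γ s)

noncomputable def cauchyPairMass (γ : ℝ≥0) (M a b : ℝ) : ℝ≥0∞ :=
  cauchyMoment γ M a * cauchyPDF 0 γ b + cauchyPDF 0 γ a * cauchyMoment γ M b

@[fun_prop]
lemma measurable_cauchyMoment (γ : ℝ≥0) (M : ℝ) : Measurable (cauchyMoment γ M) :=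
  Measurable.indicator (by fun_prop) measurableSet_Icc

@[fun_prop]
lemma Measurable.cauchyPairMass {α : Type*} [MeasurableSpace α] {f g : α → ℝ} (γ : ℝ≥0) (M : ℝ)
    (hf : Measurable f) (hg : Measurable g) :
    Measurable fun x => cauchyPairMass γ M (f x) (g x) := by
  unfold _root_.cauchyPairMass
  fun_prop

lemma ofReal_cauchyPairWeight_le {γ : ℝ≥0} {M a b : ℝ} (ha : |a| ≤ M) (hb : |b| ≤ M) :
    ENNReal.ofReal (cauchyPairWeight γ a b) ≤ cauchyPairMass γ M a b := by
  have hc : ∀ s, 0 ≤ cauchyPDFReal 0 γ s := fun s => by rw [cauchyPDFReal_def]; positivity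
  have hsplit : cauchyPairWeight γ a b = |a| * cauchyPDFReal 0 γ a * cauchyPDFReal 0 γ b +
      cauchyPDFReal 0 γ a * (|b| * cauchyPDFReal 0 γ b) := by
    rw [cauchyPairWeight]; ring
  rw [hsplit, cauchyPairMass, cauchyMoment, Set.indicator_of_mem (Set.mem_Icc.2 (abs_le.1 ha)),
    Set.indicator_of_mem (Set.mem_Icc.2 (abs_le.1 hb)), cauchyPDF, cauchyPDF,
    ← ENNReal.ofReal_mul (mul_nonneg (abs_nonneg a) (hc a)), ← ENNReal.ofReal_mul (hc a)]
  exact ENNReal.ofReal_add_le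

lemma lintegral_mul_comp_linear_le {F G : ℝ → ℝ≥0∞} (hF : Measurable F) (hG : Measurable G)
    {a b c d : ℝ} (hdet : 1 ≤ |a * d - b * c|) :
    ∫⁻ x : ℝ × ℝ, F (a * x.1 + b * x.2) * G (c * x.1 + d * x.2) ≤ (∫⁻ s, F s) * ∫⁻ s, G s := by
  let L : ℝ × ℝ →ₗ[ℝ] ℝ × ℝ :=
    (LinearMap.fst ℝ ℝ ℝ).smulRight (a, c) + (LinearMap.snd ℝ ℝ ℝ).smulRight (b, d)
  have hL : ∀ x, L x = (a * x.1 + b * x.2, c * x.1 + d * x.2) := fun x => by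
    simp [L, mul_comm]
  have hdetL : LinearMap.det L = a * d - b * c := by
    rw [← LinearMap.det_toMatrix (Module.Basis.finTwoProd ℝ), Matrix.det_fin_two]
    simp [L, LinearMap.toMatrix_apply]
  have hdet0 : LinearMap.det L ≠ 0 := by
    rw [hdetL]; rintro h; rw [h, abs_zero] at hdet; linarith
  calc ∫⁻ x : ℝ × ℝ, F (a * x.1 + b * x.2) * G (c * x.1 + d * x.2)
      = ∫⁻ y, F y.1 * G y.2 ∂(Measure.map L volume) := by
        rw [lintegral_map (by fun_prop) L.continuous_of_finiteDimensional.measurable]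
        simp only [hL]
    _ = ENNReal.ofReal |(a * d - b * c)⁻¹| * ((∫⁻ s, F s) * ∫⁻ s, G s) := by
        rw [Measure.map_linearMap_addHaar_eq_smul_addHaar _ hdet0, lintegral_smul_measure,
          Measure.volume_eq_prod, lintegral_prod_mul hF.aemeasurable hG.aemeasurable, hdetL,
          smul_eq_mul]
    _ ≤ 1 * ((∫⁻ s, F s) * ∫⁻ s, G s) := by
        gcongr
        rw [ENNReal.ofReal_le_one, abs_inv]
        exact inv_le_one_of_one_le₀ hdet
    _ = (∫⁻ s, F s) * ∫⁻ s, G s := one_mul _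

lemma lintegral_cauchyPairMass_comp_le {γ : ℝ≥0} (hγ : γ ≠ 0) (M : ℝ) {a b c d : ℝ}
    (hdet : 1 ≤ |a * d - b * c|) :
    ∫⁻ x : ℝ × ℝ, cauchyPairMass γ M (a * x.1 + b * x.2) (c * x.1 + d * x.2) ≤
      2 * ∫⁻ s, cauchyMoment γ M s := by
  unfold cauchyPairMass
  rw [lintegral_add_left (by fun_prop)]
  calc _ ≤ (∫⁻ s, cauchyMoment γ M s) * (∫⁻ s, cauchyPDF 0 γ s) +
        (∫⁻ s, cauchyPDF 0 γ s) * ∫⁻ s, cauchyMoment γ M s := by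
        gcongr <;> exact lintegral_mul_comp_linear_le (by fun_prop) (by fun_prop) hdet
    _ = 2 * ∫⁻ s, cauchyMoment γ M s := by
        rw [lintegral_cauchyPDF_eq_one 0 hγ]; ring

lemma abs_mul_cauchyPDFReal_le {γ : ℝ≥0} (hγ : γ ≠ 0) (s : ℝ) :
    |s| * cauchyPDFReal 0 γ s ≤ (√(1 + (s / γ) ^ 2))⁻¹ := by
  have hγ' : (0 : ℝ) < γ := by positivity
  have hsqrt : 0 < √(1 + (s / γ) ^ 2) := sqrt_pos.2 (by positivity)
  have hy : |s / γ| ≤ √(1 + (s / γ) ^ 2) := abs_le_sqrt (by linarith)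
  have hπ : π⁻¹ ≤ 1 := inv_le_one_of_one_le₀ (by linarith [pi_gt_three])
  calc |s| * cauchyPDFReal 0 γ s = π⁻¹ * (|s / γ| * (1 + (s / γ) ^ 2)⁻¹) := by
        rw [cauchyPDFReal_def', sub_zero, abs_div, NNReal.abs_eq, NNReal.coe_inv]; ring
    _ ≤ 1 * (√(1 + (s / γ) ^ 2) * (√(1 + (s / γ) ^ 2) ^ 2)⁻¹) := by
        rw [sq_sqrt (by positivity)]
        gcongr
    _ = (√(1 + (s / γ) ^ 2))⁻¹ := by field_simp

lemma integral_inv_sqrt_one_add_sq (X : ℝ) : ∫ y in -X..X, (√(1 + y ^ 2))⁻¹ = 2 * arsinh X := by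
  have hcont : Continuous fun y : ℝ => (√(1 + y ^ 2))⁻¹ :=
    Continuous.inv₀ (by fun_prop) fun y => (sqrt_pos.2 (by positivity)).ne'
  rw [intervalIntegral.integral_eq_sub_of_hasDerivAt (fun y _ => hasDerivAt_arsinh y)
    (hcont.intervalIntegrable _ _), arsinh_neg]
  ring

lemma lintegral_cauchyMoment_le {γ : ℝ≥0} (hγ : γ ≠ 0) {M : ℝ} (hM : 0 ≤ M) :
    ∫⁻ s, cauchyMoment γ M s ≤ ENNReal.ofReal (2 * γ * arsinh (M / γ)) := by
  have hγ' : (γ : ℝ) ≠ 0 := by positivity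
  have hcont : Continuous fun s : ℝ => (√(1 + (s / γ) ^ 2))⁻¹ :=
    Continuous.inv₀ (by fun_prop) fun y => (sqrt_pos.2 (by positivity)).ne'
  rw [cauchyMoment, lintegral_indicator measurableSet_Icc]
  calc ∫⁻ s in Set.Icc (-M) M, ENNReal.ofReal (|s| * cauchyPDFReal 0 γ s)
      ≤ ∫⁻ s in Set.Icc (-M) M, ENNReal.ofReal (√(1 + (s / γ) ^ 2))⁻¹ :=
        setLIntegral_mono (by fun_prop) fun s _ =>
          ENNReal.ofReal_le_ofReal (abs_mul_cauchyPDFReal_le hγ s)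
    _ = ENNReal.ofReal (∫ s in Set.Icc (-M) M, (√(1 + (s / γ) ^ 2))⁻¹) :=
        (ofReal_integral_eq_lintegral_ofReal (hcont.integrableOn_Icc)
          (ae_of_all _ fun s => by positivity)).symm
    _ = ENNReal.ofReal (2 * γ * arsinh (M / γ)) := by
        rw [integral_Icc_eq_integral_Ioc, ← intervalIntegral.integral_of_le (by linarith),
          intervalIntegral.integral_comp_div (fun y => (√(1 + y ^ 2))⁻¹) hγ', neg_div,
          integral_inv_sqrt_one_add_sq, smul_eq_mul]
        ring_nf

lemma arsinh_le_log_two_mul_add_one {x : ℝ} (hx : 0 ≤ x) : arsinh x ≤ log (2 * x + 1) := by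
  have hsqrt : √(1 + x ^ 2) ≤ x + 1 := by
    rw [sqrt_le_left (by linarith)]
    nlinarith
  exact log_le_log (by positivity) (by linarith)

lemma two_mul_arsinh_le {ε : ℝ} (hε0 : 0 < ε) (hε : ε ≤ 1 / 2) :
    2 * ε * arsinh (4 * π / 3 / ε) ≤ 10 * ε * |log ε| := by
  have hlog : log ε ≤ -log 2 := by
    rw [← log_inv]; exact log_le_log hε0 (by linarith)
  have hlog2 : 0 < log 2 := log_pos one_lt_two
  have h16 : log 16 = 4 * log 2 := by
    rw [show (16 : ℝ) = 2 ^ 4 by norm_num, log_pow]; norm_num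
  have harg : 2 * (4 * π / 3 / ε) + 1 ≤ 16 / ε := by
    rw [div_div, mul_div_assoc', div_add_one (by positivity), div_le_div_iff₀ (by positivity) hε0]
    nlinarith [pi_lt_d2]
  have hars : arsinh (4 * π / 3 / ε) ≤ 5 * |log ε| := by
    calc arsinh (4 * π / 3 / ε) ≤ log (2 * (4 * π / 3 / ε) + 1) :=
          arsinh_le_log_two_mul_add_one (by positivity)
      _ ≤ log (16 / ε) := log_le_log (by positivity) harg
      _ ≤ 5 * |log ε| := by
          -- `log 16 = 4 log 2 ≤ -4 log ε`
          rw [log_div (by norm_num) hε0.ne', h16, abs_of_neg (by linarith)]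
          linarith
  nlinarith

lemma ofReal_tnorm_mul_PKer_le {r : ℝ} {γ : ℝ≥0} (hr : 1 / 2 ≤ r) (hr1 : r < 1)
    (hγ : (γ : ℝ) = 1 - r) {t : ℝ × ℝ × ℝ} (ht : t ∈ OmegaH) :
    ENNReal.ofReal (tnorm t * PKer r t) ≤ ENNReal.ofReal (4096 * π ^ 2) *
      (cauchyPairMass γ (4 * π / 3) (hexAngle t.1 t.2.1) (hexAngle t.2.1 t.2.2) +
        cauchyPairMass γ (4 * π / 3) (hexAngle t.2.1 t.2.2) (hexAngle t.2.2 t.1) +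
        cauchyPairMass γ (4 * π / 3) (hexAngle t.2.2 t.1) (hexAngle t.1 t.2.1)) := by
  obtain ⟨hsum, h₁, h₁', h₂, h₂', h₃, h₃'⟩ := ht
  have ht₁ : |t.1| ≤ 1 := abs_le.2 ⟨h₁, h₁'.le⟩
  have ht₂ : |t.2.1| ≤ 1 := abs_le.2 ⟨h₂, h₂'.le⟩
  have ht₃ : |t.2.2| ≤ 1 := abs_le.2 ⟨h₃.le, h₃'⟩
  have hU := abs_hexAngle_le ht₁ ht₂
  have hV := abs_hexAngle_le ht₂ ht₃
  have hW := abs_hexAngle_le ht₃ ht₁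
  refine (ENNReal.ofReal_le_ofReal (tnorm_mul_PKer_le hr hr1 hγ hsum ht₁ ht₂ ht₃)).trans ?_
  rw [ENNReal.ofReal_mul (by positivity)]
  gcongr _ * ?_
  refine ENNReal.ofReal_add_le.trans ((add_le_add_left ENNReal.ofReal_add_le _).trans ?_)
  gcongr ?_ + ?_ + ?_
  exacts [ofReal_cauchyPairWeight_le hU hV, ofReal_cauchyPairWeight_le hV hW,
    ofReal_cauchyPairWeight_le hW hU]

lemma lintegral_cyclic_cauchyPairMass_le {γ : ℝ≥0} (hγ : γ ≠ 0) (M : ℝ) {k p : ℝ}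
    (hkp : 1 ≤ |2 * k * p|) :
    ∫⁻ x : ℝ × ℝ, (cauchyPairMass γ M (k * x.1 + -p * x.2) (k * x.1 + p * x.2) +
        cauchyPairMass γ M (k * x.1 + p * x.2) (-(2 * k) * x.1 + 0 * x.2) +
        cauchyPairMass γ M (-(2 * k) * x.1 + 0 * x.2) (k * x.1 + -p * x.2)) ≤
      6 * ∫⁻ s, cauchyMoment γ M s := by
  have hI : ∀ {a b c d : ℝ}, a * d - b * c = 2 * k * p →
      ∫⁻ x : ℝ × ℝ, cauchyPairMass γ M (a * x.1 + b * x.2) (c * x.1 + d * x.2) ≤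
        2 * ∫⁻ s, cauchyMoment γ M s := fun hdet =>
    lintegral_cauchyPairMass_comp_le hγ M (hdet ▸ hkp)
  rw [lintegral_add_left (by fun_prop), lintegral_add_left (by fun_prop)]
  calc _ ≤ (2 * ∫⁻ s, cauchyMoment γ M s) + (2 * ∫⁻ s, cauchyMoment γ M s) +
        2 * ∫⁻ s, cauchyMoment γ M s := by
        gcongr ?_ + ?_ + ?_
        exacts [hI (by ring), hI (by ring), hI (by ring)]
    _ = 6 * ∫⁻ s, cauchyMoment γ M s := by ring

lemma lintegral_tnorm_mul_PKer_le {r : ℝ} {γ : ℝ≥0} (hr : 1 / 2 ≤ r) (hr1 : r < 1)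
    (hγ : (γ : ℝ) = 1 - r) :
    ∫⁻ x in phiH ⁻¹' OmegaH, ENNReal.ofReal (tnorm (phiH x) * PKer r (phiH x)) ≤
      ENNReal.ofReal (24576 * π ^ 2) * ∫⁻ s, cauchyMoment γ (4 * π / 3) s := by
  have hγ0 : γ ≠ 0 := by rintro rfl; simp only [NNReal.coe_zero] at hγ; linarith
  set k := π * √3 / 3 with hk
  have hu : ∀ x, hexAngle (phiH x).1 (phiH x).2.1 = k * x.1 + -π * x.2 := fun x => by
    simp only [hexAngle, phiH, hk]; ring
  have hv : ∀ x, hexAngle (phiH x).2.1 (phiH x).2.2 = k * x.1 + π * x.2 := fun x => by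
    simp only [hexAngle, phiH, hk]; ring
  have hw : ∀ x, hexAngle (phiH x).2.2 (phiH x).1 = -(2 * k) * x.1 + 0 * x.2 := fun x => by
    simp only [hexAngle, phiH, hk]; ring
  have hkπ : 1 ≤ |2 * k * π| := by
    have : 3 ≤ π * √3 := by nlinarith [pi_gt_three, one_le_sqrt.2 (by norm_num : (1 : ℝ) ≤ 3)]
    rw [abs_of_pos (by positivity), hk]
    nlinarith [pi_gt_three]
  set Φ : ℝ × ℝ → ℝ≥0∞ := fun x =>
    cauchyPairMass γ (4 * π / 3) (k * x.1 + -π * x.2) (k * x.1 + π * x.2) +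
      cauchyPairMass γ (4 * π / 3) (k * x.1 + π * x.2) (-(2 * k) * x.1 + 0 * x.2) +
      cauchyPairMass γ (4 * π / 3) (-(2 * k) * x.1 + 0 * x.2) (k * x.1 + -π * x.2) with hΦ
  have hΦm : Measurable Φ := by rw [hΦ]; fun_prop
  calc ∫⁻ x in phiH ⁻¹' OmegaH, ENNReal.ofReal (tnorm (phiH x) * PKer r (phiH x))
      ≤ ∫⁻ x in phiH ⁻¹' OmegaH, ENNReal.ofReal (4096 * π ^ 2) * Φ x :=
        setLIntegral_mono (hΦm.const_mul _) fun x hx => by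
          simpa only [hΦ, hu, hv, hw] using ofReal_tnorm_mul_PKer_le hr hr1 hγ hx
    _ ≤ ∫⁻ x, ENNReal.ofReal (4096 * π ^ 2) * Φ x := setLIntegral_le_lintegral _ _
    _ ≤ ENNReal.ofReal (4096 * π ^ 2) * (6 * ∫⁻ s, cauchyMoment γ (4 * π / 3) s) := by
        rw [lintegral_const_mul _ hΦm]
        gcongr
        exact lintegral_cyclic_cauchyPairMass_le hγ0 _ hkπ
    _ = ENNReal.ofReal (24576 * π ^ 2) * ∫⁻ s, cauchyMoment γ (4 * π / 3) s := by
        rw [show (24576 : ℝ) * π ^ 2 = 6 * (4096 * π ^ 2) by ring,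
          ENNReal.ofReal_mul (by norm_num : (0 : ℝ) ≤ 6), ENNReal.ofReal_ofNat]
        ring

theorem stmt_18 :
    ∃ C : ℝ, 0 < C ∧
      ∀ r : ℝ, 1 / 2 ≤ r → r < 1 →
        hexInt (fun t => tnorm t * PKer r t) ≤ C * (1 - r) * |Real.log (1 - r)| := by
  refine ⟨245760 * π ^ 2, by positivity, fun r hr hr1 => ?_⟩
  have hε0 : 0 < 1 - r := by linarith
  obtain ⟨γ, hγ⟩ : ∃ γ : ℝ≥0, (γ : ℝ) = 1 - r := ⟨⟨1 - r, hε0.le⟩, rfl⟩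
  have hγ0 : γ ≠ 0 := by rintro rfl; simp only [NNReal.coe_zero] at hγ; linarith
  have hbound : ∫⁻ x in phiH ⁻¹' OmegaH, ENNReal.ofReal (tnorm (phiH x) * PKer r (phiH x)) ≤
      ENNReal.ofReal (245760 * π ^ 2 * (1 - r) * |log (1 - r)|) :=
    calc _ ≤ ENNReal.ofReal (24576 * π ^ 2) * ∫⁻ s, cauchyMoment γ (4 * π / 3) s :=
          lintegral_tnorm_mul_PKer_le hr hr1 hγ
      _ ≤ ENNReal.ofReal (24576 * π ^ 2) * ENNReal.ofReal (10 * (1 - r) * |log (1 - r)|) := by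
          gcongr
          refine (lintegral_cauchyMoment_le hγ0 (by positivity)).trans (ENNReal.ofReal_le_ofReal ?_)
          rw [hγ]
          exact two_mul_arsinh_le hε0 (by linarith)
      _ = _ := by rw [← ENNReal.ofReal_mul (by positivity)]; ring_nf
  have hnn : ∀ x, 0 ≤ tnorm (phiH x) * PKer r (phiH x) := fun x =>
    mul_nonneg (tnorm_nonneg _) (PKer_nonneg (by linarith) hr1 _)
  rw [hexInt, integral_eq_lintegral_of_nonneg_ae (ae_of_all _ hnn)
    (Measurable.aestronglyMeasurable (by unfold tnorm PKer qr phiH; fun_prop))]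
  exact ENNReal.toReal_le_of_le_ofReal (by positivity) hbound
end
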